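/- arXiv:2210.00565 — 3 statements merged into one kernel-verified Lean document; each statement's English description precedes it below -/
import Mathlib

section
/- Let m > 1, α = 1 - 1/m, and let 0 ≤ μ ≤ θ with θ + μ > 0 and 0 < θ ≤ 1, and set k = μ + θ. Define Φ(ξ) = (k-ξ)^{1/m-1} ξ. Then there exists a constant ĉ with 0 < ĉ ≤ 1/2 and ĉ < 1/((1-α)(2-α)) such that for all s with 0 ≤ s ≤ k, ĉ · (k-s)²/(θ+μ)^α ≤ ∫₀^{k-s} Φ(ξ) dξ. -/
open Real

theorem stmt_1 (m α θ μ k : ℝ) (hm : 1 < m) (hα : α = 1 - 1/m)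
    (hμ : 0 ≤ μ) (hμθ : μ ≤ θ) (hθpos : 0 < θ) (hθ : θ ≤ 1) (hk : k = μ + θ) :
    ∃ chat : ℝ, 0 < chat ∧ chat ≤ 1/2 ∧ chat < 1/((1 - α)*(2 - α)) ∧
      ∀ s : ℝ, 0 ≤ s → s ≤ k →
        chat * (k - s)^2 / (θ + μ) ^ α ≤
          ∫ ξ in (0:ℝ)..(k - s), (k - ξ) ^ (1/m - 1) * ξ := by
  have hm0 : 0 < m := by linarith
  have hinv : 0 < 1/m := by positivity
  have hinv1 : 1/m < 1 := by
    rw [div_lt_one hm0]; linarith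
  have hα0 : 0 < α := by rw [hα]; linarith
  have hα1 : α < 1 := by rw [hα]; linarith
  have hk0 : 0 < k := by linarith
  have hexp : 1/m - 1 = -α := by rw [hα]; ring
  refine ⟨1/2, by norm_num, le_refl _, ?_, ?_⟩
  · rw [lt_div_iff₀ (by nlinarith : (0:ℝ) < (1 - α)*(2 - α))]
    nlinarith
  · intro s hs0 hsk
    set t := k - s with ht
    have ht0 : 0 ≤ t := by simp [ht]; linarith
    have htk : t ≤ k := by simp [ht]; linarith
    -- integrability of the integrand
    have hint : IntervalIntegrable (fun ξ => (k - ξ) ^ (1/m - 1) * ξ)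
        MeasureTheory.volume 0 t := by
      have h1 : IntervalIntegrable (fun x : ℝ => x ^ (1/m - 1))
          MeasureTheory.volume (k - 0) (k - t) := by
        apply intervalIntegral.intervalIntegrable_rpow'
        · rw [hexp]; linarith
      have h2 := h1.comp_sub_left k
      simp only [sub_sub_cancel] at h2
      exact h2.mul_continuousOn continuousOn_id
    have hint2 : IntervalIntegrable (fun ξ : ℝ => k ^ (-α) * ξ)
        MeasureTheory.volume 0 t := by
      apply ContinuousOn.intervalIntegrable
      exact (continuousOn_const.mul continuousOn_id)
    -- pointwise a.e. comparison
    have hmono : (fun ξ : ℝ => k ^ (-α) * ξ)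
        ≤ᵐ[MeasureTheory.volume.restrict (Set.Icc 0 t)]
        (fun ξ => (k - ξ) ^ (1/m - 1) * ξ) := by
      have hne : ∀ᵐ ξ : ℝ ∂(MeasureTheory.volume.restrict (Set.Icc 0 t)), ξ ≠ k := by
        apply MeasureTheory.ae_restrict_of_ae
        rw [MeasureTheory.ae_iff]
        simpa using MeasureTheory.measure_singleton (α := ℝ) k
      have hmem := MeasureTheory.ae_restrict_mem (μ := MeasureTheory.volume) (measurableSet_Icc (a := (0:ℝ)) (b := t))
      filter_upwards [hne, hmem] with ξ hξne hξmem
      obtain ⟨hξ0, hξt⟩ := hξmem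
      have hξk : ξ < k := lt_of_le_of_ne (le_trans hξt htk) hξne
      have hkξ : 0 < k - ξ := by linarith
      have : k ^ (-α) ≤ (k - ξ) ^ (-α) :=
        Real.rpow_le_rpow_of_nonpos hkξ (by linarith) (by linarith)
      rw [hexp]
      exact mul_le_mul_of_nonneg_right this hξ0
    have hle := intervalIntegral.integral_mono_ae_restrict ht0 hint2 hint hmono
    calc (1:ℝ)/2 * (k - s)^2 / (θ + μ) ^ α
        = k ^ (-α) * (t^2 / 2) := by
          rw [Real.rpow_neg hk0.le, (by linarith : θ + μ = k), ← ht]; ring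
      _ = ∫ ξ in (0:ℝ)..t, k ^ (-α) * ξ := by
          rw [intervalIntegral.integral_const_mul, integral_id]; ring
      _ ≤ ∫ ξ in (0:ℝ)..t, (k - ξ) ^ (1/m - 1) * ξ := hle
end

section
/- Let m > 1, α = 1 - 1/m, k = μ + θ with μ ≥ 0, 0 < θ ≤ 1, and Φ(ξ) = (k-ξ)^{1/m-1} ξ. Then there exists a constant č ≥ m²/(1+m) such that for all s with 0 ≤ s ≤ k, ∫₀^{k-s} Φ(ξ) dξ ≤ č · (k-s)²/(θ+μ)^α. -/
open Real MeasureTheory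

set_option maxHeartbeats 1000000 in
theorem stmt_2 (m α θ μ k : ℝ) (hm : 1 < m) (hα : α = 1 - 1/m)
    (hμ : 0 ≤ μ) (hθpos : 0 < θ) (hθ : θ ≤ 1) (hk : k = μ + θ) :
    ∃ ccheck : ℝ, m^2/(1 + m) ≤ ccheck ∧
      ∀ s : ℝ, 0 ≤ s → s ≤ k →
        (∫ ξ in (0:ℝ)..(k - s), (k - ξ) ^ (1/m - 1) * ξ) ≤
          ccheck * (k - s)^2 / (θ + μ) ^ α := by
  have hm0 : (0:ℝ) < m := lt_trans one_pos hm
  have hm1 : (0:ℝ) < 1/m := by positivity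
  have hm2 : 1/m < 1 := by rw [div_lt_one hm0]; exact hm
  have hα0 : 0 < α := by rw [hα]; linarith
  have hα1 : α < 1 := by rw [hα]; linarith
  have hk0 : 0 < k := by linarith
  have hexp : 1/m - 1 = -α := by rw [hα]; ring
  have hkα : (0:ℝ) < k ^ α := Real.rpow_pos_of_pos hk0 α
  have hαneg : (-1:ℝ) < -α := by linarith
  refine ⟨m + 1, ?_, ?_⟩
  · rw [div_le_iff₀ (by linarith)]
    nlinarith
  intro s hs hsk
  have hθμ : θ + μ = k := by linarith
  rw [hθμ]
  simp only [hexp]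
  set t := k - s with hts
  clear_value t
  have ht0 : 0 ≤ t := by simp only [hts]; linarith
  have htk : t ≤ k := by simp only [hts]; linarith
  have hint : IntervalIntegrable (fun ξ => (k - ξ) ^ (-α)) volume 0 t := by
    have h1 : IntervalIntegrable (fun x : ℝ => x ^ (-α)) volume k s :=
      intervalIntegral.intervalIntegrable_rpow' hαneg
    have h2 := h1.comp_sub_left k
    rw [hts]
    simpa using h2
  have hint2 : IntervalIntegrable (fun ξ => (k - ξ) ^ (-α) * ξ) volume 0 t :=
    hint.mul_continuousOn continuous_id.continuousOn
  rcases le_or_gt (s * (m + 1)) k with hcase | hcase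
  · -- case 1 : s small
    have hIt : (∫ ξ in (0:ℝ)..t, (k - ξ) ^ (-α)) = (k ^ (1-α) - s ^ (1-α)) / (1-α) := by
      rw [intervalIntegral.integral_comp_sub_left (fun x : ℝ => x ^ (-α)) k]
      rw [show k - t = s from by simp [hts], sub_zero]
      rw [integral_rpow (Or.inl hαneg)]
      rw [show -α + 1 = 1 - α from by ring]
    have hb1 : (∫ ξ in (0:ℝ)..t, (k - ξ) ^ (-α) * ξ)
        ≤ ((k ^ (1-α) - s ^ (1-α)) / (1-α)) * t := by
      calc (∫ ξ in (0:ℝ)..t, (k - ξ) ^ (-α) * ξ)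
          ≤ ∫ ξ in (0:ℝ)..t, (k - ξ) ^ (-α) * t := by
            apply intervalIntegral.integral_mono_on ht0 hint2 (hint.mul_const t)
            intro x hx
            exact mul_le_mul_of_nonneg_left hx.2
              (Real.rpow_nonneg (by linarith [hx.2] : (0:ℝ) ≤ k - x) _)
        _ = (∫ ξ in (0:ℝ)..t, (k - ξ) ^ (-α)) * t := by
            rw [intervalIntegral.integral_mul_const]
        _ = ((k ^ (1-α) - s ^ (1-α)) / (1-α)) * t := by rw [hIt]
    refine hb1.trans ?_
    -- now pure algebra
    have h1α : 1 - α = 1/m := by rw [hα]; ring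
    have hS : 0 ≤ s ^ (1-α) := Real.rpow_nonneg hs _
    have hK : 0 ≤ k ^ (1-α) := Real.rpow_nonneg hk0.le _
    have hKA : k ^ (1-α) * k ^ α = k := by
      rw [← Real.rpow_add hk0]; norm_num
    have key : m * k * t ≤ (m + 1) * t * t := by
      have h5 : m * k ≤ (m + 1) * t := by rw [hts]; nlinarith
      nlinarith [mul_le_mul_of_nonneg_right h5 ht0]
    rw [le_div_iff₀ hkα]
    have expand : ((k ^ (1-α) - s ^ (1-α)) / (1-α)) * t * k ^ α
        = (k ^ (1-α) * k ^ α - s ^ (1-α) * k ^ α) * t * m := by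
      rw [h1α]; field_simp
    rw [expand, hKA]
    have hSA : 0 ≤ s ^ (1-α) * k ^ α := mul_nonneg hS hkα.le
    nlinarith [mul_nonneg (mul_nonneg hSA ht0) hm0.le]
  · -- case 2 : s large
    have hs0 : 0 < s := by nlinarith
    have hsα : (0:ℝ) < s ^ α := Real.rpow_pos_of_pos hs0 α
    have hb2 : (∫ ξ in (0:ℝ)..t, (k - ξ) ^ (-α) * ξ) ≤ s ^ (-α) * (t^2 / 2) := by
      calc (∫ ξ in (0:ℝ)..t, (k - ξ) ^ (-α) * ξ)
          ≤ ∫ ξ in (0:ℝ)..t, s ^ (-α) * ξ := by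
            apply intervalIntegral.integral_mono_on ht0 hint2
              ((continuous_const.mul continuous_id).intervalIntegrable 0 t)
            intro x hx
            apply mul_le_mul_of_nonneg_right _ hx.1
            exact Real.rpow_le_rpow_of_nonpos hs0 (by simp only [hts] at hx ⊢; linarith [hx.2])
              (by linarith)
        _ = s ^ (-α) * (t^2 / 2) := by
            rw [intervalIntegral.integral_const_mul, integral_id]
            norm_num
    refine hb2.trans ?_
    have hkey : k ^ α ≤ (m + 1) * s ^ α := by
      calc k ^ α ≤ ((m + 1) * s) ^ α :=
            Real.rpow_le_rpow hk0.le (by nlinarith) hα0.le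
        _ = (m + 1) ^ α * s ^ α := Real.mul_rpow (by linarith) hs0.le
        _ ≤ (m + 1) * s ^ α := by
            apply mul_le_mul_of_nonneg_right _ hsα.le
            calc (m + 1) ^ α ≤ (m + 1) ^ (1:ℝ) :=
                  Real.rpow_le_rpow_of_exponent_le (by linarith) hα1.le
              _ = m + 1 := Real.rpow_one _
    rw [Real.rpow_neg hs0.le, le_div_iff₀ hkα]
    rw [inv_mul_eq_div, div_mul_eq_mul_div, div_le_iff₀ hsα]
    calc t ^ 2 / 2 * k ^ α ≤ t ^ 2 / 2 * ((m + 1) * s ^ α) :=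
          mul_le_mul_of_nonneg_left hkey (by positivity)
      _ ≤ (m + 1) * t ^ 2 * s ^ α := by
          nlinarith [mul_nonneg (sq_nonneg t) hsα.le]
end

section
/- (Fast geometric convergence) Let (Xᵢ) and (Yᵢ), i = 0, 1, 2, ..., be sequences of positive real numbers satisfying X_{i+1} ≤ c bⁱ (Xᵢ^{1+â} + Xᵢ^â Yᵢ^{1+κ}) and Y_{i+1} ≤ c bⁱ (Xᵢ + Yᵢ^{1+κ}), where c, b > 1 and κ, â > 0 are given. If X₀ + Y₀^{1+κ} ≤ (2c)^{-(1+κ)/σ} b^{-(1+κ)/σ²} with σ = min(κ, â), then Xᵢ → 0 and Yᵢ → 0 as i → ∞. -/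
open Real Filter

theorem stmt_3 (X Y : ℕ → ℝ) (c b κ ahat : ℝ) (σ : ℝ)
    (hc : 1 < c) (hb : 1 < b) (hκ : 0 < κ) (hahat : 0 < ahat) (hσ : σ = min κ ahat)
    (hXpos : ∀ i, 0 < X i) (hYpos : ∀ i, 0 < Y i)
    (hX : ∀ i, X (i+1) ≤ c * b ^ (i:ℝ) * (X i ^ (1 + ahat) + X i ^ ahat * Y i ^ (1 + κ)))
    (hY : ∀ i, Y (i+1) ≤ c * b ^ (i:ℝ) * (X i + Y i ^ (1 + κ)))
    (h0 : X 0 + Y 0 ^ (1 + κ) ≤ (2*c) ^ (-(1+κ)/σ) * b ^ (-(1+κ)/σ^2)) :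
    Tendsto X atTop (nhds 0) ∧ Tendsto Y atTop (nhds 0) := by
  have hσκ : σ ≤ κ := hσ ▸ min_le_left _ _
  have hσa : σ ≤ ahat := hσ ▸ min_le_right _ _
  have hσ0 : 0 < σ := hσ ▸ lt_min hκ hahat
  have hb0 : (0:ℝ) < b := lt_trans one_pos hb
  have hc0 : (0:ℝ) < c := lt_trans one_pos hc
  have h2c : (1:ℝ) < 2*c := by nlinarith
  have h2c0 : (0:ℝ) < 2*c := by linarith
  set A := (2*c) ^ (-(1+κ)/σ) * b ^ (-(1+κ)/σ^2) with hA
  set B := b ^ ((1+κ)/σ) with hB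
  have hApos : 0 < A := mul_pos (rpow_pos_of_pos h2c0 _) (rpow_pos_of_pos hb0 _)
  have hA1 : A ≤ 1 := by
    have e1 : -(1+κ)/σ ≤ 0 := div_nonpos_of_nonpos_of_nonneg (by linarith) hσ0.le
    have e2 : -(1+κ)/σ^2 ≤ 0 := div_nonpos_of_nonpos_of_nonneg (by linarith) (by positivity)
    have h1 : (2*c) ^ (-(1+κ)/σ) ≤ 1 := rpow_le_one_of_one_le_of_nonpos h2c.le e1
    have h2 : b ^ (-(1+κ)/σ^2) ≤ 1 := rpow_le_one_of_one_le_of_nonpos hb.le e2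
    calc A ≤ 1 * 1 := mul_le_mul h1 h2 (rpow_pos_of_pos hb0 _).le one_pos.le
    _ = 1 := by ring
  have hB1 : 1 < B := by
    rw [hB]
    exact (one_lt_rpow_iff_of_pos hb0).mpr (Or.inl ⟨hb, by positivity⟩)
  have hBpos : (0:ℝ) < B := lt_trans one_pos hB1
  -- the key identity
  have hkey_eq : ∀ i : ℕ,
      (2:ℝ) ^ (1+κ) * c ^ (1+κ) * b ^ ((i:ℝ)*(1+κ)) * (A * B ^ (-(i:ℝ))) ^ (1+σ)
        = A * B ^ (-((i:ℝ)+1)) := by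
    intro i
    have hσne : σ ≠ 0 := ne_of_gt hσ0
    have hL : (0:ℝ) < (2:ℝ) ^ (1+κ) * c ^ (1+κ) * b ^ ((i:ℝ)*(1+κ)) * (A * B ^ (-(i:ℝ))) ^ (1+σ) := by
      positivity
    have hR : (0:ℝ) < A * B ^ (-((i:ℝ)+1)) := by positivity
    have lA : Real.log A = (-(1+κ)/σ) * (Real.log 2 + Real.log c) + (-(1+κ)/σ^2) * Real.log b := by
      rw [hA, Real.log_mul (by positivity) (by positivity), Real.log_rpow h2c0,
          Real.log_rpow hb0, Real.log_mul two_ne_zero (ne_of_gt hc0)]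
    have lB : ∀ x : ℝ, Real.log (B ^ x) = x * ((1+κ)/σ) * Real.log b := by
      intro x
      rw [Real.log_rpow hBpos, hB, Real.log_rpow hb0]; ring
    rw [← Real.exp_log hL, ← Real.exp_log hR]
    congr 1
    rw [Real.log_mul (by positivity) (by positivity),
        Real.log_mul (by positivity) (by positivity),
        Real.log_mul (by positivity) (by positivity),
        Real.log_rpow two_pos, Real.log_rpow hc0, Real.log_rpow hb0,
        Real.log_rpow (show (0:ℝ) < A * B ^ (-(i:ℝ)) by positivity),
        Real.log_mul (ne_of_gt hApos) (by positivity),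
        Real.log_mul (ne_of_gt hApos) (by positivity),
        lA, lB, lB]
    field_simp
    ring
  -- the main induction
  have key : ∀ i : ℕ, X i + Y i ^ (1+κ) ≤ A * B ^ (-(i:ℝ)) := by
    intro i
    induction i with
    | zero => simpa using h0
    | succ i ih =>
      have hZpos : 0 < X i + Y i ^ (1+κ) := add_pos (hXpos i) (rpow_pos_of_pos (hYpos i) _)
      have hABle1 : A * B ^ (-(i:ℝ)) ≤ 1 := by
        have hBi : B ^ (-(i:ℝ)) ≤ 1 := rpow_le_one_of_one_le_of_nonpos hB1.le (neg_nonpos.mpr (Nat.cast_nonneg i))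
        calc A * B ^ (-(i:ℝ)) ≤ 1 * 1 :=
              mul_le_mul hA1 hBi (rpow_pos_of_pos hBpos _).le one_pos.le
        _ = 1 := by ring
      have hZ1 : X i + Y i ^ (1+κ) ≤ 1 := le_trans ih hABle1
      have hcb1 : (1:ℝ) ≤ c * b ^ (i:ℝ) := by
        have hbi : (1:ℝ) ≤ b ^ (i:ℝ) := Real.one_le_rpow hb.le (by positivity)
        nlinarith
      have hcb0 : (0:ℝ) < c * b ^ (i:ℝ) := lt_of_lt_of_le one_pos hcb1
      set Z := X i + Y i ^ (1+κ) with hZ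
      have hXleZ : X i ≤ Z := by
        rw [hZ]; nlinarith [rpow_pos_of_pos (hYpos i) (1+κ)]
      have hXa : X i ^ ahat ≤ Z ^ ahat := rpow_le_rpow (hXpos i).le hXleZ hahat.le
      have h1 : X (i+1) ≤ c * b ^ (i:ℝ) * (Z ^ ahat * Z) := by
        have e : X i ^ (1 + ahat) + X i ^ ahat * Y i ^ (1 + κ) = X i ^ ahat * Z := by
          rw [hZ, Real.rpow_add (hXpos i), Real.rpow_one]; ring
        calc X (i+1) ≤ c * b ^ (i:ℝ) * (X i ^ (1 + ahat) + X i ^ ahat * Y i ^ (1 + κ)) := hX i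
          _ = c * b ^ (i:ℝ) * (X i ^ ahat * Z) := by rw [e]
          _ ≤ c * b ^ (i:ℝ) * (Z ^ ahat * Z) := by
              apply mul_le_mul_of_nonneg_left _ hcb0.le
              exact mul_le_mul_of_nonneg_right hXa hZpos.le
      have h2 : Y (i+1) ^ (1+κ) ≤ (c * b ^ (i:ℝ)) ^ (1+κ) * Z ^ (1+κ) := by
        calc Y (i+1) ^ (1+κ) ≤ (c * b ^ (i:ℝ) * Z) ^ (1+κ) :=
              rpow_le_rpow (hYpos (i+1)).le (hY i) (by positivity)
          _ = (c * b ^ (i:ℝ)) ^ (1+κ) * Z ^ (1+κ) := mul_rpow hcb0.le hZpos.le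
      have hZsa : Z ^ ahat * Z ≤ Z ^ (1+σ) := by
        have hh : Z ^ (1+ahat) ≤ Z ^ (1+σ) :=
          rpow_le_rpow_of_exponent_ge hZpos hZ1 (by linarith)
        calc Z ^ ahat * Z = Z ^ (1+ahat) := by
              rw [Real.rpow_add hZpos, Real.rpow_one]; ring
          _ ≤ Z ^ (1+σ) := hh
      have hZsk : Z ^ (1+κ) ≤ Z ^ (1+σ) :=
        rpow_le_rpow_of_exponent_ge hZpos hZ1 (by linarith)
      have hcbk : c * b ^ (i:ℝ) ≤ (c * b ^ (i:ℝ)) ^ (1+κ) := by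
        calc c * b ^ (i:ℝ) = (c * b ^ (i:ℝ)) ^ (1:ℝ) := (Real.rpow_one _).symm
          _ ≤ (c * b ^ (i:ℝ)) ^ (1+κ) := rpow_le_rpow_of_exponent_le hcb1 (by linarith)
      have h3 : X (i+1) + Y (i+1) ^ (1+κ) ≤ 2 * (c * b ^ (i:ℝ)) ^ (1+κ) * Z ^ (1+σ) := by
        have a1 : X (i+1) ≤ (c * b ^ (i:ℝ)) ^ (1+κ) * Z ^ (1+σ) := by
          calc X (i+1) ≤ c * b ^ (i:ℝ) * (Z ^ ahat * Z) := h1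
            _ ≤ (c * b ^ (i:ℝ)) ^ (1+κ) * Z ^ (1+σ) :=
                mul_le_mul hcbk hZsa
                  (mul_nonneg (rpow_pos_of_pos hZpos _).le hZpos.le)
                  (rpow_pos_of_pos hcb0 _).le
        have a2 : Y (i+1) ^ (1+κ) ≤ (c * b ^ (i:ℝ)) ^ (1+κ) * Z ^ (1+σ) := by
          calc Y (i+1) ^ (1+κ) ≤ (c * b ^ (i:ℝ)) ^ (1+κ) * Z ^ (1+κ) := h2
            _ ≤ (c * b ^ (i:ℝ)) ^ (1+κ) * Z ^ (1+σ) :=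
                mul_le_mul_of_nonneg_left hZsk (rpow_pos_of_pos hcb0 _).le
        linarith
      have h4 : 2 * (c * b ^ (i:ℝ)) ^ (1+κ) * Z ^ (1+σ)
          ≤ (2:ℝ) ^ (1+κ) * c ^ (1+κ) * b ^ ((i:ℝ)*(1+κ)) * (A * B ^ (-(i:ℝ))) ^ (1+σ) := by
        have e1 : (c * b ^ (i:ℝ)) ^ (1+κ) = c ^ (1+κ) * b ^ ((i:ℝ)*(1+κ)) := by
          rw [mul_rpow hc0.le (rpow_pos_of_pos hb0 _).le, ← Real.rpow_mul hb0.le]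
        have h2le : (2:ℝ) ≤ (2:ℝ) ^ (1+κ) := by
          calc (2:ℝ) = (2:ℝ) ^ (1:ℝ) := (Real.rpow_one _).symm
            _ ≤ (2:ℝ) ^ (1+κ) := rpow_le_rpow_of_exponent_le one_le_two (by linarith)
        have hZAB : Z ^ (1+σ) ≤ (A * B ^ (-(i:ℝ))) ^ (1+σ) :=
          rpow_le_rpow hZpos.le ih (by linarith)
        rw [e1]
        calc 2 * (c ^ (1+κ) * b ^ ((i:ℝ)*(1+κ))) * Z ^ (1+σ)
            ≤ (2:ℝ) ^ (1+κ) * (c ^ (1+κ) * b ^ ((i:ℝ)*(1+κ))) * (A * B ^ (-(i:ℝ))) ^ (1+σ) := by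
              apply mul_le_mul (mul_le_mul_of_nonneg_right h2le (by positivity)) hZAB
                (rpow_pos_of_pos hZpos _).le (by positivity)
          _ = (2:ℝ) ^ (1+κ) * c ^ (1+κ) * b ^ ((i:ℝ)*(1+κ)) * (A * B ^ (-(i:ℝ))) ^ (1+σ) := by
              ring
      calc X (i+1) + Y (i+1) ^ (1+κ)
          ≤ (2:ℝ) ^ (1+κ) * c ^ (1+κ) * b ^ ((i:ℝ)*(1+κ)) * (A * B ^ (-(i:ℝ))) ^ (1+σ) :=
            le_trans h3 h4
        _ = A * B ^ (-((i:ℝ)+1)) := hkey_eq i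
        _ = A * B ^ (-((i+1:ℕ):ℝ)) := by push_cast; ring_nf
  -- the bound tends to 0
  have hlim : Tendsto (fun i : ℕ => A * B ^ (-(i:ℝ))) atTop (nhds 0) := by
    have he : ∀ i : ℕ, A * B ^ (-(i:ℝ)) = A * (B⁻¹) ^ i := by
      intro i
      rw [Real.rpow_neg hBpos.le, Real.rpow_natCast, inv_pow]
    have hgeo : Tendsto (fun i : ℕ => A * (B⁻¹) ^ i) atTop (nhds (A * 0)) :=
      Tendsto.const_mul A
        (tendsto_pow_atTop_nhds_zero_of_lt_one (by positivity) (inv_lt_one_of_one_lt₀ hB1))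
    rw [mul_zero] at hgeo
    exact hgeo.congr (fun i => (he i).symm)
  have hXlim : Tendsto X atTop (nhds 0) := by
    apply squeeze_zero (fun i => (hXpos i).le) (fun i => ?_) hlim
    have hk := key i
    nlinarith [rpow_pos_of_pos (hYpos i) (1+κ)]
  refine ⟨hXlim, ?_⟩
  have hWlim : Tendsto (fun i => Y i ^ (1+κ)) atTop (nhds 0) := by
    apply squeeze_zero (fun i => (rpow_pos_of_pos (hYpos i) _).le) (fun i => ?_) hlim
    have hk := key i
    nlinarith [hXpos i]
  have hYeq : ∀ i, Y i = (Y i ^ (1+κ)) ^ ((1+κ)⁻¹) := by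
    intro i
    rw [← Real.rpow_mul (hYpos i).le, mul_inv_cancel₀ (by positivity : (1:ℝ)+κ ≠ 0),
        Real.rpow_one]
  have hfin : Tendsto (fun i => (Y i ^ (1+κ)) ^ ((1+κ)⁻¹)) atTop (nhds ((0:ℝ) ^ ((1+κ)⁻¹))) :=
    hWlim.rpow_const (Or.inr (by positivity))
  rw [Real.zero_rpow (by positivity)] at hfin
  exact hfin.congr (fun i => (hYeq i).symm)
end
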